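/- arXiv:1806.00785 — 2 statements merged into one kernel-verified Lean document; each statement's English description precedes it below -/
import Mathlib

section
/- If a topological space X is F-Y countably domain representable, then player α has a winning strategy in the strong Choquet game on X (X is Choquet complete). -/
open Set TopologicalSpace

universe u v

/-! ### The Banach–Mazur game -/

/-- Response of α's strategy `s` to β's moves `U 0, …, U n` in the Banach–Mazur game. -/
def bmResp {X : Type v} (s : ∀ n : ℕ, (Fin (n + 1) → Set X) → Set X)
    (U : ℕ → Set X) (n : ℕ) : Set X :=
  s n (fun i => U i)

/-- β's moves `U 0, …, U n` form a legal partial play against the strategy `s`: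
each `U k` is a nonempty open set and `U (k+1)` is contained in α's previous response. -/
def bmLegal {X : Type v} [TopologicalSpace X]
    (s : ∀ n : ℕ, (Fin (n + 1) → Set X) → Set X) (U : ℕ → Set X) (n : ℕ) : Prop :=
  (∀ k ≤ n, IsOpen (U k) ∧ (U k).Nonempty) ∧
  (∀ k, k + 1 ≤ n → U (k + 1) ⊆ bmResp s U k)

/-- `s` is a winning strategy for α in the Banach–Mazur game: to any legal partial play
it responds with a nonempty open subset of β's last move, and the intersection of its
responses along any infinite legal play is nonempty. -/
def IsBMWinning {X : Type v} [TopologicalSpace X]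
    (s : ∀ n : ℕ, (Fin (n + 1) → Set X) → Set X) : Prop :=
  (∀ U n, bmLegal s U n →
      IsOpen (bmResp s U n) ∧ (bmResp s U n).Nonempty ∧ bmResp s U n ⊆ U n) ∧
  (∀ U : ℕ → Set X, (∀ n, bmLegal s U n) → (⋂ n, bmResp s U n).Nonempty)

/-- A space is weakly α-favorable if α has a winning strategy in the Banach–Mazur game. -/
def WeaklyAlphaFavorable (X : Type v) [TopologicalSpace X] : Prop :=
  ∃ s : ∀ n : ℕ, (Fin (n + 1) → Set X) → Set X, IsBMWinning s

/-! ### The strong Choquet game -/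

/-- Response of α's strategy `s` to β's moves `(x 0, U 0), …, (x n, U n)`. -/
def scResp {X : Type v} (s : ∀ n : ℕ, (Fin (n + 1) → X × Set X) → Set X)
    (p : ℕ → X × Set X) (n : ℕ) : Set X :=
  s n (fun i => p i)

/-- β's moves `(x k, U k)` for `k ≤ n` form a legal partial play of the strong Choquet game
against `s`: each `U k` is open with `x k ∈ U k`, and `U (k+1)` is contained in α's previous
response. -/
def scLegal {X : Type v} [TopologicalSpace X]
    (s : ∀ n : ℕ, (Fin (n + 1) → X × Set X) → Set X) (p : ℕ → X × Set X) (n : ℕ) : Prop :=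
  (∀ k ≤ n, IsOpen (p k).2 ∧ (p k).1 ∈ (p k).2) ∧
  (∀ k, k + 1 ≤ n → (p (k + 1)).2 ⊆ scResp s p k)

/-- `s` is a winning strategy for α in the strong Choquet game. -/
def IsSCWinning {X : Type v} [TopologicalSpace X]
    (s : ∀ n : ℕ, (Fin (n + 1) → X × Set X) → Set X) : Prop :=
  (∀ p n, scLegal s p n →
      IsOpen (scResp s p n) ∧ (p n).1 ∈ scResp s p n ∧ scResp s p n ⊆ (p n).2) ∧
  (∀ p : ℕ → X × Set X, (∀ n, scLegal s p n) → (⋂ n, scResp s p n).Nonempty)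

/-- A space is Choquet complete if α has a winning strategy in the strong Choquet game. -/
def ChoquetComplete (X : Type v) [TopologicalSpace X] : Prop :=
  ∃ s : ∀ n : ℕ, (Fin (n + 1) → X × Set X) → Set X, IsSCWinning s

/-! ### Fleissner–Yengulalp domain representability -/

/-- X is F-Y countably π-domain representable: there is a triple `(Q, ≪, B)` where
`B` maps `Q` to nonempty open sets forming a π-base, `≪` is transitive, `p ≪ q`
implies `B p ⊇ B q`, any two elements whose `B`-values meet have a common upper bound,
and every countable upward directed `D ⊆ Q` has `⋂ {B q : q ∈ D} ≠ ∅`. -/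
def FYCountablyPiDomainRep (X : Type v) [TopologicalSpace X] : Prop :=
  ∃ (Q : Type u) (r : Q → Q → Prop) (B : Q → Set X),
    (∀ q, IsOpen (B q) ∧ (B q).Nonempty) ∧
    (∀ U : Set X, IsOpen U → U.Nonempty → ∃ q, B q ⊆ U) ∧
    Transitive r ∧
    (∀ p q, r p q → B q ⊆ B p) ∧
    (∀ p q, (B p ∩ B q).Nonempty → ∃ t, r p t ∧ r q t) ∧
    (∀ D : Set Q, D.Nonempty → D.Countable → DirectedOn r D → (⋂ q ∈ D, B q).Nonempty)

/-- X is F-Y π-domain representable (the intersection condition holds for all upward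
directed subsets, of arbitrary cardinality). -/
def FYPiDomainRep (X : Type v) [TopologicalSpace X] : Prop :=
  ∃ (Q : Type u) (r : Q → Q → Prop) (B : Q → Set X),
    (∀ q, IsOpen (B q) ∧ (B q).Nonempty) ∧
    (∀ U : Set X, IsOpen U → U.Nonempty → ∃ q, B q ⊆ U) ∧
    Transitive r ∧
    (∀ p q, r p q → B q ⊆ B p) ∧
    (∀ p q, (B p ∩ B q).Nonempty → ∃ t, r p t ∧ r q t) ∧
    (∀ D : Set Q, D.Nonempty → DirectedOn r D → (⋂ q ∈ D, B q).Nonempty)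

/-- X is F-Y countably domain representable: there is a triple `(Q, ≪, B)` where
`B` maps `Q` to nonempty open sets forming a base, `≪` is transitive, `p ≪ q`
implies `B p ⊇ B q`, for every point `x` the set `{q : x ∈ B q}` is upward directed,
and every countable upward directed `D ⊆ Q` has `⋂ {B q : q ∈ D} ≠ ∅`. -/
def FYCountablyDomainRep (X : Type v) [TopologicalSpace X] : Prop :=
  ∃ (Q : Type u) (r : Q → Q → Prop) (B : Q → Set X),
    (∀ q, IsOpen (B q) ∧ (B q).Nonempty) ∧
    (∀ U : Set X, IsOpen U → ∀ x ∈ U, ∃ q, x ∈ B q ∧ B q ⊆ U) ∧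
    Transitive r ∧
    (∀ p q, r p q → B q ⊆ B p) ∧
    (∀ x : X, DirectedOn r {q | x ∈ B q}) ∧
    (∀ D : Set Q, D.Nonempty → D.Countable → DirectedOn r D → (⋂ q ∈ D, B q).Nonempty)

/-- X is F-Y domain representable (the intersection condition holds for all upward
directed subsets, of arbitrary cardinality). -/
def FYDomainRep (X : Type v) [TopologicalSpace X] : Prop :=
  ∃ (Q : Type u) (r : Q → Q → Prop) (B : Q → Set X),
    (∀ q, IsOpen (B q) ∧ (B q).Nonempty) ∧
    (∀ U : Set X, IsOpen U → ∀ x ∈ U, ∃ q, x ∈ B q ∧ B q ⊆ U) ∧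
    Transitive r ∧
    (∀ p q, r p q → B q ⊆ B p) ∧
    (∀ x : X, DirectedOn r {q | x ∈ B q}) ∧
    (∀ D : Set Q, D.Nonempty → DirectedOn r D → (⋂ q ∈ D, B q).Nonempty)

/-! ### The space σ({0,1}^{ω₁}) with the ω₁-box topology -/

/-- The σ-product of the Cantor cube over `I`: points with countable support. -/
def Sigma01 (I : Type v) : Type v := {x : I → Bool // {a | x a = true}.Countable}

/-- The basic set `pr_A⁻¹(f↾A)`: points of the σ-product agreeing with `f` on `A`. -/
def basicSet (I : Type v) (A : Set I) (f : I → Bool) : Set (Sigma01 I) :=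
  {y | ∀ a ∈ A, y.1 a = f a}

/-- The ω₁-box topology on the σ-product, generated by the sets `pr_A⁻¹(f↾A)`
for countable `A`. -/
instance Sigma01.topologicalSpace (I : Type v) : TopologicalSpace (Sigma01 I) :=
  TopologicalSpace.generateFrom
    {U | ∃ (A : Set I) (f : I → Bool), A.Countable ∧ U = basicSet I A f}

/-!
α answers β's move `(xₙ, Uₙ)` with `Vₙ = B(qₙ)`, where `xₙ ∈ B(qₙ) ⊆ Uₙ` and `qₙ₋₁ ≪ qₙ`.
Such a `qₙ` exists because `xₙ ∈ Uₙ ⊆ B(qₙ₋₁)`: take a basic `B(q')` with `xₙ ∈ B(q') ⊆ Uₙ`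
and a common `≪`-upper bound of `qₙ₋₁` and `q'` in the directed set `{q : xₙ ∈ B q}`.
The indices `qₙ` form a `≪`-chain, hence a countable directed set, so `⋂ Vₙ ≠ ∅` by (D5_{ω₁}).
-/

lemma choquetComplete_of_isEmpty {X : Type v} [TopologicalSpace X] [IsEmpty X] :
    ChoquetComplete X :=
  ⟨fun _ _ => ∅, fun p _ _ => isEmptyElim (p 0).1, fun p _ => isEmptyElim (p 0).1⟩

section ChainStrategy

variable {X : Type v} [TopologicalSpace X] {Q : Type u} (r : Q → Q → Prop) (B : Q → Set X)

noncomputable def chainStrategyIndex [Nonempty Q] : ∀ n : ℕ, (Fin (n + 1) → X × Set X) → Q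
  | 0, p => Classical.epsilon fun t => (p 0).1 ∈ B t ∧ B t ⊆ (p 0).2
  | n + 1, p => Classical.epsilon fun t =>
      r (chainStrategyIndex n fun i => p i.castSucc) t ∧
        (p (Fin.last _)).1 ∈ B t ∧ B t ⊆ (p (Fin.last _)).2

noncomputable def chainStrategy [Nonempty Q] : ∀ n : ℕ, (Fin (n + 1) → X × Set X) → Set X :=
  fun n p => B (chainStrategyIndex r B n p)

variable {r B}

lemma chainStrategyIndex_zero_spec [Nonempty Q]
    (hbase : ∀ U : Set X, IsOpen U → ∀ x ∈ U, ∃ q, x ∈ B q ∧ B q ⊆ U)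
    {p : ℕ → X × Set X} (hU : IsOpen (p 0).2) (hx : (p 0).1 ∈ (p 0).2) :
    (p 0).1 ∈ B (chainStrategyIndex r B 0 fun i => p i) ∧
      B (chainStrategyIndex r B 0 fun i => p i) ⊆ (p 0).2 :=
  Classical.epsilon_spec (hbase _ hU _ hx)

lemma chainStrategyIndex_succ_spec [Nonempty Q]
    (hext : ∀ q (U : Set X), IsOpen U → ∀ x ∈ U, x ∈ B q → ∃ t, r q t ∧ x ∈ B t ∧ B t ⊆ U)
    {p : ℕ → X × Set X} {n : ℕ} (hU : IsOpen (p (n + 1)).2) (hx : (p (n + 1)).1 ∈ (p (n + 1)).2)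
    (hsub : (p (n + 1)).2 ⊆ B (chainStrategyIndex r B n fun i => p i)) :
    r (chainStrategyIndex r B n fun i => p i) (chainStrategyIndex r B (n + 1) fun i => p i) ∧
      (p (n + 1)).1 ∈ B (chainStrategyIndex r B (n + 1) fun i => p i) ∧
      B (chainStrategyIndex r B (n + 1) fun i => p i) ⊆ (p (n + 1)).2 :=
  Classical.epsilon_spec (hext _ _ hU _ hx (hsub hx))

theorem choquetComplete_of_chains (hopen : ∀ q, IsOpen (B q))
    (hbase : ∀ U : Set X, IsOpen U → ∀ x ∈ U, ∃ q, x ∈ B q ∧ B q ⊆ U)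
    (hext : ∀ q (U : Set X), IsOpen U → ∀ x ∈ U, x ∈ B q → ∃ t, r q t ∧ x ∈ B t ∧ B t ⊆ U)
    (hchain : ∀ c : ℕ → Q, (∀ n, r (c n) (c (n + 1))) → (⋂ n, B (c n)).Nonempty) :
    ChoquetComplete X := by
  rcases isEmpty_or_nonempty X with _ | ⟨⟨x⟩⟩
  · exact choquetComplete_of_isEmpty
  obtain ⟨q, -⟩ := hbase univ isOpen_univ x trivial
  have : Nonempty Q := ⟨q⟩
  refine ⟨chainStrategy r B, fun p n hlegal => ?_, fun p hlegal => ?_⟩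
  · refine ⟨hopen _, ?_⟩
    obtain ⟨hU, hx⟩ := hlegal.1 n le_rfl
    cases n with
    | zero => exact chainStrategyIndex_zero_spec hbase hU hx
    | succ n => exact (chainStrategyIndex_succ_spec hext hU hx (hlegal.2 n le_rfl)).2
  · refine hchain (fun n => chainStrategyIndex r B n fun i => p i) fun n => ?_
    obtain ⟨hU, hx⟩ := (hlegal (n + 1)).1 (n + 1) le_rfl
    exact (chainStrategyIndex_succ_spec hext hU hx ((hlegal (n + 1)).2 n le_rfl)).1

end ChainStrategy

lemma exists_rel_mem_subset_of_directedOn {X : Type v} [TopologicalSpace X] {Q : Type u}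
    {r : Q → Q → Prop} {B : Q → Set X}
    (hbase : ∀ U : Set X, IsOpen U → ∀ x ∈ U, ∃ q, x ∈ B q ∧ B q ⊆ U)
    (hmono : ∀ p q, r p q → B q ⊆ B p) (hdir : ∀ x : X, DirectedOn r {q | x ∈ B q})
    (q : Q) (U : Set X) (hU : IsOpen U) (x : X) (hxU : x ∈ U) (hxq : x ∈ B q) :
    ∃ t, r q t ∧ x ∈ B t ∧ B t ⊆ U := by
  obtain ⟨q', hxq', hq'U⟩ := hbase U hU x hxU
  obtain ⟨t, hxt, hqt, hq't⟩ := hdir x q hxq q' hxq'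
  exact ⟨t, hqt, hxt, (hmono q' t hq't).trans hq'U⟩

lemma directedOn_range_of_rel_succ {Q : Type u} {r : Q → Q → Prop} [IsTrans Q r]
    {c : ℕ → Q} (hc : ∀ n, r (c n) (c (n + 1))) : DirectedOn r (range c) := by
  rintro _ ⟨m, rfl⟩ _ ⟨n, rfl⟩
  exact ⟨c (max m n + 1), mem_range_self _, Nat.rel_of_forall_rel_succ_of_lt r hc (by omega),
    Nat.rel_of_forall_rel_succ_of_lt r hc (by omega)⟩

/-- F-Y countably domain representable implies Choquet complete. -/
theorem stmt3 {X : Type v} [TopologicalSpace X]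
    (h : FYCountablyDomainRep.{u} X) : ChoquetComplete X := by
  obtain ⟨Q, r, B, hvals, hbase, htrans, hmono, hdir, hcap⟩ := h
  have : IsTrans Q r := ⟨fun _ _ _ => @htrans _ _ _⟩
  refine choquetComplete_of_chains (fun q => (hvals q).1) hbase
    (exists_rel_mem_subset_of_directedOn hbase hmono hdir) fun c hc => ?_
  obtain ⟨x, hx⟩ := hcap (range c) (range_nonempty c) (countable_range c)
    (directedOn_range_of_rel_succ hc)
  exact ⟨x, mem_iInter.2 fun n => mem_iInter₂.1 hx (c n) (mem_range_self n)⟩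
end

section
/- The space σ({0,1}^{ω₁}) with the ω₁-box topology is not F-Y π-domain representable. -/
open Set TopologicalSpace

universe u v

/-!
Suppose `(Q, ≪, B)` were an F-Y π-domain representation. Given a countable directed `E ⊆ Q`, its
`B`-values share a point `x`, and since countable intersections of open sets are open in the
ω₁-box topology, some basic neighbourhood of `x` lies in all of them. Shrinking it to force a
fresh coordinate `b ∉ supp x` to be `1` and picking `p` with `B p` inside, a chain
`p ≪ u₁ ≪ u₂ ≪ ⋯` absorbing `E` extends `E ∪ {p}` to a countable directed set that forces `b`,
which no element of `E` forced. Iterating ω₁ times, taking unions at limit stages, yields a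
directed set forcing uncountably many coordinates to be `1`; a common point of its `B`-values
would then have uncountable support.
-/

open Filter

section Directed

variable {α : Type*} {r : α → α → Prop}

theorem DirectedOn.of_eventually_rel {D : Set α} {u : ℕ → α} (hu : ∀ n, u n ∈ D)
    (h : ∀ a ∈ D, ∀ᶠ k in atTop, r a (u k)) : DirectedOn r D := fun a ha b hb =>
  let ⟨k, hak, hbk⟩ := ((h a ha).and (h b hb)).exists
  ⟨u k, hu k, hak, hbk⟩

theorem exists_countable_directedOn_superset [IsTrans α r] {S T : Set α}
    (hS : S.Countable) (hSne : S.Nonempty) {t₀ : α} (ht₀ : t₀ ∈ T)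
    (hT : ∀ t ∈ T, ∀ s ∈ S, ∃ t' ∈ T, r t t' ∧ r s t') :
    ∃ D, S ⊆ D ∧ D.Countable ∧ DirectedOn r D := by
  obtain ⟨e, rfl⟩ := hS.exists_eq_range hSne
  choose g hgT hg using fun (t : T) n => hT t t.2 (e n) (mem_range_self n)
  let u : ℕ → T := fun n => Nat.rec ⟨t₀, ht₀⟩ (fun n t => ⟨g t n, hgT t n⟩) n
  have hchain : ∀ {m k : ℕ}, m < k → r (u m).1 (u k).1 := fun h =>
    Nat.rel_of_forall_rel_succ_of_lt r (f := fun n => (u n).1) (fun n => (hg (u n) n).1) h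
  refine ⟨range e ∪ range fun n => (u n).1, subset_union_left,
    (countable_range e).union (countable_range _),
    DirectedOn.of_eventually_rel (fun n => Or.inr (mem_range_self n)) ?_⟩
  rintro _ (⟨n, rfl⟩ | ⟨n, rfl⟩)
  · exact (eventually_gt_atTop (n + 1)).mono fun k hk => _root_.trans (hg (u n) n).2 (hchain hk)
  · exact (eventually_gt_atTop n).mono fun k hk => hchain hk

theorem monotoneOn_of_biUnion_Iio_subset {W : Type*} [PartialOrder W] {s : Set W}
    {D : W → Set α} (h : ∀ w ∈ s, ⋃ v ∈ Iio w, D v ⊆ D w) : MonotoneOn D s :=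
  fun _ _ w hw hle => hle.lt_or_eq.elim
    (fun hlt => (subset_biUnion_of_mem (u := D) (s := Iio w) hlt).trans (h w hw))
    fun heq => heq ▸ subset_rfl

theorem exists_directedOn_injective_of_countable_extension {I : Type*} (P : α → I → Prop)
    {W : Type*} [LinearOrder W] [WellFoundedLT W] (hW : ∀ w : W, (Iio w).Countable)
    (hext : ∀ E : Set α, E.Countable → DirectedOn r E → ∃ E' b, E ⊆ E' ∧ E'.Countable ∧
      DirectedOn r E' ∧ (∃ q ∈ E', P q b) ∧ ∀ q ∈ E, ¬ P q b) :
    ∃ D : Set α, DirectedOn r D ∧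
      ∃ c : W → I, Function.Injective c ∧ ∀ w, ∃ q ∈ D, P q (c w) := by
  have : Nonempty I :=
    let ⟨_, b, _⟩ := hext ∅ countable_empty fun _ h => h.elim
    ⟨b⟩
  choose! next coord hnext using hext
  let D : W → Set α := WellFoundedLT.fix fun w D => next (⋃ (v) (h : v < w), D v h)
  let S : W → Set α := fun w => ⋃ v ∈ Iio w, D v
  have hD : ∀ w, D w = next (S w) := WellFoundedLT.fix_eq _
  -- `next` is specified only on countable directed sets, hence the invariant of the induction.
  have hS : ∀ w, (S w).Countable ∧ DirectedOn r (S w) := by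
    intro w
    induction w using WellFoundedLT.induction with
    | ind w ih =>
      have hDv : ∀ v < w, (D v).Countable ∧ DirectedOn r (D v) ∧ S v ⊆ D v := fun v hv => by
        obtain ⟨hsub, hcount, hdir, -⟩ := hnext _ (ih v hv).1 (ih v hv).2
        exact hD v ▸ ⟨hcount, hdir, hsub⟩
      have hmono : MonotoneOn D (Iio w) :=
        monotoneOn_of_biUnion_Iio_subset fun v hv => (hDv v hv).2.2
      have := (hW w).to_subtype
      simp only [S, biUnion_eq_iUnion]
      exact ⟨countable_iUnion fun v => (hDv v v.2).1,
        directedOn_iUnion (monotoneOn_iff_monotone.1 hmono).directed_le fun v => (hDv v v.2).2.1⟩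
  have hnextS := fun w => hnext (S w) (hS w).1 (hS w).2
  have hSD : ∀ w, S w ⊆ D w := fun w => hD w ▸ (hnextS w).1
  have hmono : Monotone D :=
    monotoneOn_univ.1 (monotoneOn_of_biUnion_Iio_subset fun w _ => hSD w)
  refine ⟨⋃ w, D w, directedOn_iUnion hmono.directed_le fun w => hD w ▸ (hnextS w).2.2.1,
    fun w => coord (S w), Function.Injective.of_lt_imp_ne fun v w hvw hc => ?_,
    fun w => ?_⟩
  · obtain ⟨q, hq, hPq⟩ := (hnextS v).2.2.2.1
    exact (hnextS w).2.2.2.2 q (mem_biUnion hvw (hD v ▸ hq)) (hc ▸ hPq)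
  · obtain ⟨q, hq, hPq⟩ := (hnextS w).2.2.2.1
    exact ⟨q, mem_iUnion_of_mem w (hD w ▸ hq), hPq⟩

end Directed

theorem Cardinal.uncountable_ord_aleph_one_toType :
    Uncountable (Cardinal.aleph.{0} 1).ord.ToType := by
  rw [← Cardinal.aleph0_lt_mk_iff, Cardinal.mk_ord_toType]
  exact Cardinal.aleph0_lt_aleph_one

theorem Cardinal.countable_Iio_ord_aleph_one_toType (w : (Cardinal.aleph.{0} 1).ord.ToType) :
    (Iio w).Countable := by
  have := Cardinal.mk_Iio_lt w (by simp)
  rwa [Cardinal.mk_ord_toType, Cardinal.lt_aleph_one_iff,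
    Cardinal.le_aleph0_iff_set_countable] at this

namespace Sigma01

variable {I : Type v}

instance : Inhabited (Sigma01 I) := ⟨⟨fun _ => false, by simp⟩⟩

theorem isOpen_basicSet {A : Set I} (hA : A.Countable) (f : I → Bool) :
    IsOpen (basicSet I A f) :=
  GenerateOpen.basic _ ⟨A, f, hA, rfl⟩

theorem basicSet_nonempty {A : Set I} (hA : A.Countable) (f : I → Bool) :
    (basicSet I A f).Nonempty := by
  classical
  refine ⟨⟨fun a => if a ∈ A then f a else false, hA.mono fun a ha => ?_⟩, fun a ha => if_pos ha⟩
  by_contra h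
  simp [h] at ha

theorem exists_basicSet_subset {U : Set (Sigma01 I)} (hU : IsOpen U) {x : Sigma01 I}
    (hx : x ∈ U) : ∃ A : Set I, A.Countable ∧ basicSet I A x.1 ⊆ U := by
  induction hU generalizing x with
  | basic U hU =>
    obtain ⟨A, f, hA, rfl⟩ := hU
    exact ⟨A, hA, fun y hy a ha => (hy a ha).trans (hx a ha)⟩
  | univ => exact ⟨∅, countable_empty, subset_univ _⟩
  | inter U V _ _ ihU ihV =>
    obtain ⟨A, hA, hAU⟩ := ihU hx.1
    obtain ⟨A', hA', hA'V⟩ := ihV hx.2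
    exact ⟨A ∪ A', hA.union hA', fun y hy =>
      ⟨hAU fun a ha => hy a (.inl ha), hA'V fun a ha => hy a (.inr ha)⟩⟩
  | sUnion S _ ih =>
    obtain ⟨t, htS, hxt⟩ := hx
    obtain ⟨A, hA, hAt⟩ := ih t htS hxt
    exact ⟨A, hA, hAt.trans (subset_sUnion_of_mem htS)⟩

theorem isOpen_biInter_countable {ι : Type*} {s : Set ι} (hs : s.Countable)
    {U : ι → Set (Sigma01 I)} (hU : ∀ i ∈ s, IsOpen (U i)) : IsOpen (⋂ i ∈ s, U i) := by
  refine isOpen_iff_forall_mem_open.2 fun x hx => ?_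
  choose! A hA hAU using fun i hi => exists_basicSet_subset (hU i hi) (mem_iInter₂.1 hx i hi)
  exact ⟨basicSet I (⋃ i ∈ s, A i) x.1,
    subset_iInter₂ fun i hi y hy => hAU i hi fun a ha => hy a (mem_biUnion hi ha),
    isOpen_basicSet (hs.biUnion hA) _, fun _ _ => rfl⟩

theorem exists_forcing_extension [Uncountable I] {Q : Type u} {r : Q → Q → Prop} [IsTrans Q r]
    {B : Q → Set (Sigma01 I)} (hB : ∀ q, IsOpen (B q) ∧ (B q).Nonempty)
    (hpi : ∀ U : Set (Sigma01 I), IsOpen U → U.Nonempty → ∃ q, B q ⊆ U)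
    (hmono : ∀ p q, r p q → B q ⊆ B p)
    (hpair : ∀ p q, (B p ∩ B q).Nonempty → ∃ t, r p t ∧ r q t)
    {E : Set Q} (hE : E.Countable) {x : Sigma01 I} (hx : ∀ q ∈ E, x ∈ B q) :
    ∃ E' b, E ⊆ E' ∧ E'.Countable ∧ DirectedOn r E' ∧
      (∃ q ∈ E', B q ⊆ {y | y.1 b = true}) ∧ ∀ q ∈ E, ¬ B q ⊆ {y | y.1 b = true} := by
  classical
  obtain ⟨A, hA, hAE⟩ := exists_basicSet_subset
    (isOpen_biInter_countable hE fun q _ => (hB q).1) (mem_iInter₂.2 hx)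
  obtain ⟨b, hb⟩ : ∃ b, b ∉ A ∪ {a | x.1 a = true} := by
    by_contra! h
    exact not_countable (countable_univ_iff.1 ((hA.union x.2).mono fun a _ => h a))
  let V := basicSet I (insert b A) (Function.update x.1 b true)
  have hVE : V ⊆ ⋂ q ∈ E, B q := fun y hy => hAE fun a ha => by
    rw [hy a (mem_insert_of_mem b ha), Function.update_of_ne (ne_of_mem_of_not_mem ha
      fun h => hb (.inl h))]
  have hVb : V ⊆ {y | y.1 b = true} := fun y hy => by simpa using hy b (mem_insert b A)
  obtain ⟨p, hp⟩ := hpi V (isOpen_basicSet (hA.insert b) _) (basicSet_nonempty (hA.insert b) _)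
  have hpE : ∀ s ∈ insert p E, B p ⊆ B s := by
    rintro s (rfl | hs)
    · exact subset_rfl
    · exact hp.trans (hVE.trans (biInter_subset_of_mem hs))
  obtain ⟨D, hED, hD, hDdir⟩ := exists_countable_directedOn_superset
    (T := {t | B t ⊆ B p}) (hE.insert p) (insert_nonempty p E) (subset_refl (B p))
    fun t (ht : B t ⊆ B p) s hs => by
      obtain ⟨t', hrt, hrs⟩ := hpair t s (by
        rw [inter_eq_left.2 (ht.trans (hpE s hs))]
        exact (hB t).2)
      exact ⟨t', (hmono t t' hrt).trans ht, hrt, hrs⟩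
  exact ⟨D, b, (subset_insert p E).trans hED, hD, hDdir, ⟨p, hED (mem_insert p E), hp.trans hVb⟩,
    fun q hq hforce => hb (.inr (hforce (hx q hq)))⟩

end Sigma01

/-- σ({0,1}^{ω₁}) with the ω₁-box topology is not F-Y π-domain
representable. -/
theorem stmt12 {I : Type v} (hI : Cardinal.mk I = Cardinal.aleph 1) :
    ¬ FYPiDomainRep.{u} (Sigma01 I) := by
  rintro ⟨Q, r, B, hB, hpi, htr, hmono, hpair, hdir⟩
  have : Uncountable I := Cardinal.aleph0_lt_mk_iff.1 (hI ▸ Cardinal.aleph0_lt_aleph_one)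
  have hcommon : ∀ E : Set Q, DirectedOn r E → ∃ x, ∀ q ∈ E, x ∈ B q := fun E hE => by
    rcases E.eq_empty_or_nonempty with rfl | hne
    · exact ⟨default, fun _ => False.elim⟩
    · exact (hdir E hne hE).imp fun x hx => mem_iInter₂.1 hx
  have := Cardinal.uncountable_ord_aleph_one_toType
  have : IsTrans Q r := ⟨fun _ _ _ h₁ h₂ => htr h₁ h₂⟩
  obtain ⟨D, hD, c, hc, hforce⟩ := exists_directedOn_injective_of_countable_extension
    (fun q b => B q ⊆ {y | y.1 b = true}) Cardinal.countable_Iio_ord_aleph_one_toType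
    fun E hE hEdir => let ⟨_, hx⟩ := hcommon E hEdir
      Sigma01.exists_forcing_extension hB hpi hmono hpair hE hx
  obtain ⟨q₀, hq₀, -⟩ := hforce (Classical.arbitrary _)
  obtain ⟨x, hx⟩ := hdir D ⟨q₀, hq₀⟩ hD
  have hsupp : ∀ w, c w ∈ {a | x.1 a = true} := fun w =>
    let ⟨q, hq, hforced⟩ := hforce w
    hforced (mem_iInter₂.1 hx q hq)
  have := x.2.to_subtype
  exact not_countable (hc.codRestrict hsupp).countable
end
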